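/- arXiv:1404.1300 — 4 statements merged into one kernel-verified Lean document; each statement's English description precedes it below -/
import Mathlib

section
/- Suppose for each (i,j) the vertical scaling function s_{ij} : E_{ij} → R vanishes on ∂E_{ij} and the boundary-matching conditions on h_{ij} hold. Then for any φ ∈ C(E), the piecewise-defined function Tφ given on each E_{ij} by (Tφ)(x,y) = s_{ij}(x,y)·(φ(L_{ij}⁻¹(x,y)) − g_{ij}(L_{ij}⁻¹(x,y))) + h_{ij}(x,y) is well-defined and continuous on E, i.e. the definitions agree on the shared edges of adjacent subrectangles. -/
open Set

/-!
Each `s i j` vanishes on the boundary of its cell and `h i j` takes the prescribed curves there,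
so every piece `s i j * w + h i j` restricts to `q α` on a grid line `x = x α`, and to `r β` on
`y = y β`, whatever `w` is. Two distinct cells meet only on grid lines, so the pieces agree on
overlaps, and the pasting lemma for the finitely many closed cells gives continuity.
-/

theorem exists_continuousOn_iUnion_of_eqOn_inter {ι X Y : Type*} [Finite ι] [TopologicalSpace X]
    [TopologicalSpace Y] [Nonempty Y] {R : ι → Set X} (hR : ∀ c, IsClosed (R c))
    {F : ι → X → Y} (hF : ∀ c, ContinuousOn (F c) (R c))
    (hagree : ∀ c c', EqOn (F c) (F c') (R c ∩ R c')) :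
    ∃ T : X → Y, ContinuousOn T (⋃ c, R c) ∧ ∀ c, EqOn T (F c) (R c) := by
  classical
  let T : X → Y := fun p => if hp : ∃ c, p ∈ R c then F hp.choose p else Classical.arbitrary Y
  have hT : ∀ c, EqOn T (F c) (R c) := fun c p hp => by
    have hex : ∃ c, p ∈ R c := ⟨c, hp⟩
    simp only [T, dif_pos hex]
    exact hagree _ _ ⟨hex.choose_spec, hp⟩
  exact ⟨T, (locallyFinite_of_finite R).continuousOn_iUnion hR fun c => (hF c).congr (hT c), hT⟩

namespace Fin

variable {α : Type*} {N : ℕ}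

theorem exists_mem_Icc_castSucc_succ [LinearOrder α] {u : Fin (N + 1) → α} (hN : 0 < N) {a : α}
    (ha : a ∈ Icc (u 0) (u (last N))) : ∃ i : Fin N, a ∈ Icc (u i.castSucc) (u i.succ) := by
  by_contra! hout
  have hle : ∀ k, u k ≤ a := fun k =>
    Fin.induction ha.1 (fun i hi => (not_le.1 fun h => hout i ⟨hi, h⟩).le) k
  obtain ⟨N, rfl⟩ := Nat.exists_eq_add_one_of_ne_zero hN.ne'
  exact hout (last N) ⟨hle _, by simpa using ha.2⟩

theorem iUnion_Icc_castSucc_succ [LinearOrder α] {u : Fin (N + 1) → α} (hu : Monotone u)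
    (hN : 0 < N) : ⋃ i : Fin N, Icc (u i.castSucc) (u i.succ) = Icc (u 0) (u (last N)) :=
  Subset.antisymm (iUnion_subset fun _ => Icc_subset_Icc (hu (zero_le _)) (hu (le_last _)))
    fun _ ha => mem_iUnion.2 (exists_mem_Icc_castSucc_succ hN ha)

theorem mem_range_of_mem_Icc_castSucc_succ_of_ne [PartialOrder α] {u : Fin (N + 1) → α}
    (hu : Monotone u) {i i' : Fin N} (hne : i ≠ i') {a : α}
    (ha : a ∈ Icc (u i.castSucc) (u i.succ)) (ha' : a ∈ Icc (u i'.castSucc) (u i'.succ)) :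
    a ∈ range u := by
  wlog hlt : i < i' generalizing i i'
  · exact this hne.symm ha' ha (hne.symm.lt_of_le (not_lt.1 hlt))
  exact ⟨i.succ, le_antisymm ((hu (succ_le_castSucc_iff.2 hlt)).trans ha'.1) ha.2⟩

end Fin

namespace StrictMono

variable {α R : Type*} [Preorder α] {N : ℕ} {u : Fin (N + 1) → α}

theorem eq_castSucc_or_eq_succ_of_apply_mem_Icc (hu : StrictMono u) {i : Fin N}
    {k : Fin (N + 1)} (hk : u k ∈ Icc (u i.castSucc) (u i.succ)) :
    k = i.castSucc ∨ k = i.succ := by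
  have hlo := hu.le_iff_le.1 hk.1
  have hhi := hu.le_iff_le.1 hk.2
  simp only [Fin.le_def, Fin.val_castSucc, Fin.val_succ] at hlo hhi
  simp only [Fin.ext_iff, Fin.val_castSucc, Fin.val_succ]
  omega

theorem mul_add_apply_eq_of_apply_mem_Icc [NonUnitalNonAssocSemiring R] (hu : StrictMono u)
    {i : Fin N} {σ η : α → R} {Q : Fin (N + 1) → R}
    (hσ : σ (u i.castSucc) = 0 ∧ σ (u i.succ) = 0)
    (hη : η (u i.castSucc) = Q i.castSucc ∧ η (u i.succ) = Q i.succ)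
    {k : Fin (N + 1)} (hk : u k ∈ Icc (u i.castSucc) (u i.succ)) (w : R) :
    σ (u k) * w + η (u k) = Q k := by
  rcases hu.eq_castSucc_or_eq_succ_of_apply_mem_Icc hk with rfl | rfl
  · simp only [hσ.1, hη.1, zero_mul, zero_add]
  · simp only [hσ.2, hη.2, zero_mul, zero_add]

end StrictMono

theorem mul_add_eqOn_inter_of_boundary {n m : ℕ} {x : Fin (n + 1) → ℝ} {y : Fin (m + 1) → ℝ}
    {s h : Fin n → Fin m → ℝ × ℝ → ℝ} {q : Fin (n + 1) → ℝ → ℝ} {r : Fin (m + 1) → ℝ → ℝ}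
    (hx : StrictMono x) (hy : StrictMono y)
    (hsbdx : ∀ i j, ∀ b ∈ Icc (y j.castSucc) (y j.succ),
      s i j (x i.castSucc, b) = 0 ∧ s i j (x i.succ, b) = 0)
    (hsbdy : ∀ i j, ∀ a ∈ Icc (x i.castSucc) (x i.succ),
      s i j (a, y j.castSucc) = 0 ∧ s i j (a, y j.succ) = 0)
    (hhq : ∀ i j, ∀ b ∈ Icc (y j.castSucc) (y j.succ),
      h i j (x i.castSucc, b) = q i.castSucc b ∧ h i j (x i.succ, b) = q i.succ b)
    (hhr : ∀ i j, ∀ a ∈ Icc (x i.castSucc) (x i.succ),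
      h i j (a, y j.castSucc) = r j.castSucc a ∧ h i j (a, y j.succ) = r j.succ a)
    (w : Fin n → Fin m → ℝ × ℝ → ℝ) (i i' : Fin n) (j j' : Fin m) :
    EqOn (fun p => s i j p * w i j p + h i j p) (fun p => s i' j' p * w i' j' p + h i' j' p)
      ((Icc (x i.castSucc) (x i.succ) ×ˢ Icc (y j.castSucc) (y j.succ)) ∩
        (Icc (x i'.castSucc) (x i'.succ) ×ˢ Icc (y j'.castSucc) (y j'.succ))) := by
  rintro ⟨a, b⟩ ⟨⟨ha, hb⟩, ha', hb'⟩
  by_cases hi : i = i'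
  · subst hi
    by_cases hj : j = j'
    · subst hj; rfl
    obtain ⟨β, rfl⟩ := Fin.mem_range_of_mem_Icc_castSucc_succ_of_ne hy.monotone hj hb hb'
    have on_row : ∀ {j}, y β ∈ Icc (y j.castSucc) (y j.succ) →
        s i j (a, y β) * w i j (a, y β) + h i j (a, y β) = r β a := fun hb =>
      hy.mul_add_apply_eq_of_apply_mem_Icc (σ := fun t => s i _ (a, t))
        (η := fun t => h i _ (a, t)) (Q := fun β => r β a) (hsbdy _ _ a ha) (hhr _ _ a ha) hb _
    exact (on_row hb).trans (on_row hb').symm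
  obtain ⟨α, rfl⟩ := Fin.mem_range_of_mem_Icc_castSucc_succ_of_ne hx.monotone hi ha ha'
  have on_column : ∀ {i j}, x α ∈ Icc (x i.castSucc) (x i.succ) →
      b ∈ Icc (y j.castSucc) (y j.succ) →
      s i j (x α, b) * w i j (x α, b) + h i j (x α, b) = q α b := fun ha hb =>
    hx.mul_add_apply_eq_of_apply_mem_Icc (σ := fun t => s _ _ (t, b))
      (η := fun t => h _ _ (t, b)) (Q := fun α => q α b) (hsbdx _ _ b hb) (hhq _ _ b hb) ha _
  exact (on_column ha hb).trans (on_column ha' hb').symm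

theorem T_welldefined_continuous_general (n m : ℕ) (hn : 0 < n) (hm : 0 < m)
    (x : Fin (n + 1) → ℝ) (y : Fin (m + 1) → ℝ)
    (hx : StrictMono x) (hy : StrictMono y)
    -- the horizontal and vertical contraction homeomorphisms and their inverses
    (Lx' : Fin n → ℝ → ℝ) (Ly' : Fin m → ℝ → ℝ)
    (hLx'map : ∀ i, MapsTo (Lx' i) (Icc (x i.castSucc) (x i.succ))
      (Icc (x 0) (x (Fin.last n))))
    (hLx'cont : ∀ i, ContinuousOn (Lx' i) (Icc (x i.castSucc) (x i.succ)))
    (hLy'map : ∀ j, MapsTo (Ly' j) (Icc (y j.castSucc) (y j.succ))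
      (Icc (y 0) (y (Fin.last m))))
    (hLy'cont : ∀ j, ContinuousOn (Ly' j) (Icc (y j.castSucc) (y j.succ)))
    -- vertical scaling factors, Lipschitz, |s| < 1, vanishing on ∂E_{ij}
    (s : Fin n → Fin m → ℝ × ℝ → ℝ)
    (hslip : ∀ i j, ∃ K : NNReal, LipschitzOnWith K (s i j)
      (Icc (x i.castSucc) (x i.succ) ×ˢ Icc (y j.castSucc) (y j.succ)))
    (hsbdx : ∀ i j, ∀ b ∈ Icc (y j.castSucc) (y j.succ),
      s i j (x i.castSucc, b) = 0 ∧ s i j (x i.succ, b) = 0)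
    (hsbdy : ∀ i j, ∀ a ∈ Icc (x i.castSucc) (x i.succ),
      s i j (a, y j.castSucc) = 0 ∧ s i j (a, y j.succ) = 0)
    -- the Lipschitz functions g_{ij} on E
    (g : Fin n → Fin m → ℝ × ℝ → ℝ)
    (hglip : ∀ i j, ∃ K : NNReal, LipschitzOnWith K (g i j)
      (Icc (x 0) (x (Fin.last n)) ×ˢ Icc (y 0) (y (Fin.last m))))
    -- interpolation curves q_α, r_β of the column/row data
    (q : Fin (n + 1) → ℝ → ℝ) (r : Fin (m + 1) → ℝ → ℝ)
    -- the Lipschitz functions h_{ij} with prescribed boundary curves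
    (h : Fin n → Fin m → ℝ × ℝ → ℝ)
    (hhlip : ∀ i j, ∃ K : NNReal, LipschitzOnWith K (h i j)
      (Icc (x i.castSucc) (x i.succ) ×ˢ Icc (y j.castSucc) (y j.succ)))
    (hhq : ∀ i j, ∀ b ∈ Icc (y j.castSucc) (y j.succ),
      h i j (x i.castSucc, b) = q i.castSucc b ∧ h i j (x i.succ, b) = q i.succ b)
    (hhr : ∀ i j, ∀ a ∈ Icc (x i.castSucc) (x i.succ),
      h i j (a, y j.castSucc) = r j.castSucc a ∧ h i j (a, y j.succ) = r j.succ a)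
    -- a member φ of C(E)
    (φ : ℝ × ℝ → ℝ)
    (hφcont : ContinuousOn φ (Icc (x 0) (x (Fin.last n)) ×ˢ Icc (y 0) (y (Fin.last m)))) :
    ∃ Tφ : ℝ × ℝ → ℝ,
      ContinuousOn Tφ (Icc (x 0) (x (Fin.last n)) ×ˢ Icc (y 0) (y (Fin.last m))) ∧
      ∀ i j, ∀ p ∈ Icc (x i.castSucc) (x i.succ) ×ˢ Icc (y j.castSucc) (y j.succ),
        Tφ p = s i j p * (φ (Lx' i p.1, Ly' j p.2) - g i j (Lx' i p.1, Ly' j p.2)) +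
          h i j p := by
  set w : Fin n → Fin m → ℝ × ℝ → ℝ := fun i j p =>
    φ (Lx' i p.1, Ly' j p.2) - g i j (Lx' i p.1, Ly' j p.2)
  have hw : ∀ i j, ContinuousOn (w i j)
      (Icc (x i.castSucc) (x i.succ) ×ˢ Icc (y j.castSucc) (y j.succ)) := fun i j => by
    have hL := (hLx'cont i).prodMap (hLy'cont j)
    have hLmaps := (hLx'map i).prodMap (hLy'map j)
    obtain ⟨Kg, hKg⟩ := hglip i j
    exact (hφcont.comp hL hLmaps).sub (hKg.continuousOn.comp hL hLmaps)
  obtain ⟨T, hTcont, hT⟩ := exists_continuousOn_iUnion_of_eqOn_inter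
    (R := fun c : Fin n × Fin m =>
      Icc (x c.1.castSucc) (x c.1.succ) ×ˢ Icc (y c.2.castSucc) (y c.2.succ))
    (F := fun c p => s c.1 c.2 p * w c.1 c.2 p + h c.1 c.2 p)
    (fun _ => isClosed_Icc.prod isClosed_Icc)
    (fun ⟨i, j⟩ => by
      obtain ⟨Ks, hKs⟩ := hslip i j
      obtain ⟨Kh, hKh⟩ := hhlip i j
      exact (hKs.continuousOn.mul (hw i j)).add hKh.continuousOn)
    (fun c c' => mul_add_eqOn_inter_of_boundary hx hy hsbdx hsbdy hhq hhr w c.1 c'.1 c.2 c'.2)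
  refine ⟨T, ?_, fun i j p hp => hT (i, j) hp⟩
  rwa [← Fin.iUnion_Icc_castSucc_succ hx.monotone hn,
    ← Fin.iUnion_Icc_castSucc_succ hy.monotone hm, ← iUnion_prod]

/-- The piecewise definition of `Tφ` on the subrectangles `E_{ij}` is
well-defined (the formulas agree on shared edges) and yields a continuous
function on `E`. -/
theorem T_welldefined_continuous (n m : ℕ) (hn : 0 < n) (hm : 0 < m)
    (x : Fin (n + 1) → ℝ) (y : Fin (m + 1) → ℝ)
    (hx : StrictMono x) (hy : StrictMono y)
    (z : Fin (n + 1) → Fin (m + 1) → ℝ)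
    -- the horizontal and vertical contraction homeomorphisms and their inverses
    (Lx Lx' : Fin n → ℝ → ℝ) (Ly Ly' : Fin m → ℝ → ℝ)
    (hLxmap : ∀ i, MapsTo (Lx i) (Icc (x 0) (x (Fin.last n)))
      (Icc (x i.castSucc) (x i.succ)))
    (hLx'map : ∀ i, MapsTo (Lx' i) (Icc (x i.castSucc) (x i.succ))
      (Icc (x 0) (x (Fin.last n))))
    (hLxinv : ∀ i, ∀ t ∈ Icc (x 0) (x (Fin.last n)), Lx' i (Lx i t) = t)
    (hLxinv' : ∀ i, ∀ t ∈ Icc (x i.castSucc) (x i.succ), Lx i (Lx' i t) = t)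
    (hLxcont : ∀ i, ContinuousOn (Lx i) (Icc (x 0) (x (Fin.last n))))
    (hLx'cont : ∀ i, ContinuousOn (Lx' i) (Icc (x i.castSucc) (x i.succ)))
    (hLxcontr : ∀ i, ∃ c : ℝ, c < 1 ∧ ∀ t ∈ Icc (x 0) (x (Fin.last n)),
      ∀ t' ∈ Icc (x 0) (x (Fin.last n)), |Lx i t - Lx i t'| ≤ c * |t - t'|)
    (hLxend : ∀ i, (Lx i (x 0) = x i.castSucc ∧ Lx i (x (Fin.last n)) = x i.succ) ∨
      (Lx i (x 0) = x i.succ ∧ Lx i (x (Fin.last n)) = x i.castSucc))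
    (hLymap : ∀ j, MapsTo (Ly j) (Icc (y 0) (y (Fin.last m)))
      (Icc (y j.castSucc) (y j.succ)))
    (hLy'map : ∀ j, MapsTo (Ly' j) (Icc (y j.castSucc) (y j.succ))
      (Icc (y 0) (y (Fin.last m))))
    (hLyinv : ∀ j, ∀ t ∈ Icc (y 0) (y (Fin.last m)), Ly' j (Ly j t) = t)
    (hLyinv' : ∀ j, ∀ t ∈ Icc (y j.castSucc) (y j.succ), Ly j (Ly' j t) = t)
    (hLycont : ∀ j, ContinuousOn (Ly j) (Icc (y 0) (y (Fin.last m))))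
    (hLy'cont : ∀ j, ContinuousOn (Ly' j) (Icc (y j.castSucc) (y j.succ)))
    (hLycontr : ∀ j, ∃ c : ℝ, c < 1 ∧ ∀ t ∈ Icc (y 0) (y (Fin.last m)),
      ∀ t' ∈ Icc (y 0) (y (Fin.last m)), |Ly j t - Ly j t'| ≤ c * |t - t'|)
    (hLyend : ∀ j, (Ly j (y 0) = y j.castSucc ∧ Ly j (y (Fin.last m)) = y j.succ) ∨
      (Ly j (y 0) = y j.succ ∧ Ly j (y (Fin.last m)) = y j.castSucc))
    -- vertical scaling factors, Lipschitz, |s| < 1, vanishing on ∂E_{ij}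
    (s : Fin n → Fin m → ℝ × ℝ → ℝ)
    (hslip : ∀ i j, ∃ K : NNReal, LipschitzOnWith K (s i j)
      (Icc (x i.castSucc) (x i.succ) ×ˢ Icc (y j.castSucc) (y j.succ)))
    (hs1 : ∀ i j, ∀ p ∈ Icc (x i.castSucc) (x i.succ) ×ˢ Icc (y j.castSucc) (y j.succ),
      |s i j p| < 1)
    (hsbdx : ∀ i j, ∀ b ∈ Icc (y j.castSucc) (y j.succ),
      s i j (x i.castSucc, b) = 0 ∧ s i j (x i.succ, b) = 0)
    (hsbdy : ∀ i j, ∀ a ∈ Icc (x i.castSucc) (x i.succ),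
      s i j (a, y j.castSucc) = 0 ∧ s i j (a, y j.succ) = 0)
    -- the Lipschitz functions g_{ij} on E
    (g : Fin n → Fin m → ℝ × ℝ → ℝ)
    (hglip : ∀ i j, ∃ K : NNReal, LipschitzOnWith K (g i j)
      (Icc (x 0) (x (Fin.last n)) ×ˢ Icc (y 0) (y (Fin.last m))))
    -- interpolation curves q_α, r_β of the column/row data
    (q : Fin (n + 1) → ℝ → ℝ) (r : Fin (m + 1) → ℝ → ℝ)
    (hqcont : ∀ α, ContinuousOn (q α) (Icc (y 0) (y (Fin.last m))))
    (hrcont : ∀ β, ContinuousOn (r β) (Icc (x 0) (x (Fin.last n))))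
    (hqdata : ∀ α β, q α (y β) = z α β) (hrdata : ∀ α β, r β (x α) = z α β)
    -- the Lipschitz functions h_{ij} with prescribed boundary curves
    (h : Fin n → Fin m → ℝ × ℝ → ℝ)
    (hhlip : ∀ i j, ∃ K : NNReal, LipschitzOnWith K (h i j)
      (Icc (x i.castSucc) (x i.succ) ×ˢ Icc (y j.castSucc) (y j.succ)))
    (hhq : ∀ i j, ∀ b ∈ Icc (y j.castSucc) (y j.succ),
      h i j (x i.castSucc, b) = q i.castSucc b ∧ h i j (x i.succ, b) = q i.succ b)
    (hhr : ∀ i j, ∀ a ∈ Icc (x i.castSucc) (x i.succ),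
      h i j (a, y j.castSucc) = r j.castSucc a ∧ h i j (a, y j.succ) = r j.succ a)
    -- a member φ of C(E)
    (φ : ℝ × ℝ → ℝ)
    (hφcont : ContinuousOn φ (Icc (x 0) (x (Fin.last n)) ×ˢ Icc (y 0) (y (Fin.last m))))
    (hφq : ∀ α, ∀ b ∈ Icc (y 0) (y (Fin.last m)), φ (x α, b) = q α b)
    (hφr : ∀ β, ∀ a ∈ Icc (x 0) (x (Fin.last n)), φ (a, y β) = r β a) :
    ∃ Tφ : ℝ × ℝ → ℝ,
      ContinuousOn Tφ (Icc (x 0) (x (Fin.last n)) ×ˢ Icc (y 0) (y (Fin.last m))) ∧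
      ∀ i j, ∀ p ∈ Icc (x i.castSucc) (x i.succ) ×ˢ Icc (y j.castSucc) (y j.succ),
        Tφ p = s i j p * (φ (Lx' i p.1, Ly' j p.2) - g i j (Lx' i p.1, Ly' j p.2)) +
          h i j p :=
  T_welldefined_continuous_general n m hn hm x y hx hy Lx' Ly' hLx'map hLx'cont hLy'map hLy'cont s
    hslip hsbdx hsbdy g hglip q r h hhlip hhq hhr φ hφcont
end

section
/- Under the hypotheses above (s_{ij} vanishing on ∂E_{ij}, h_{ij} matching the boundary interpolation curves), the operator T maps C(E) into C(E): for any φ ∈ C(E), Tφ restricted to the grid line {x_α} × I_y equals q_α for each α = 0,...,n, and Tφ restricted to I_x × {y_β} equals r_β for each β = 0,...,m. -/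
/-!
Every point of a grid line lies on an edge of some subrectangle `E_{ij}`. There `s_{ij}`
vanishes, so `Tφ = h_{ij}`, and the boundary conditions on `h_{ij}` identify it with the
interpolation curve `q_α` or `r_β`.
-/

open Set

theorem Fin.exists_castSucc_eq_or_succ_eq {n : ℕ} (hn : 0 < n) (α : Fin (n + 1)) :
    ∃ i : Fin n, i.castSucc = α ∨ i.succ = α := by
  obtain ⟨k, rfl⟩ := Nat.exists_eq_succ_of_ne_zero hn.ne'
  obtain ⟨i, rfl⟩ | rfl := α.eq_castSucc_or_eq_last
  · exact ⟨i, .inl rfl⟩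
  · exact ⟨Fin.last k, .inr (Fin.succ_last k)⟩

theorem Monotone.exists_mem_Icc_castSucc_succ {α : Type*} [LinearOrder α] {m : ℕ}
    {y : Fin (m + 1) → α} (hy : Monotone y) (hm : 0 < m) {b : α}
    (hb : b ∈ Icc (y 0) (y (Fin.last m))) :
    ∃ j : Fin m, b ∈ Icc (y j.castSucc) (y j.succ) := by
  induction m with
  | zero => omega
  | succ k ih =>
    rcases k.eq_zero_or_pos with rfl | hk
    · exact ⟨0, hb⟩
    by_cases hb' : b ≤ y (Fin.last k).castSucc
    · obtain ⟨j, hj⟩ := ih (hy.comp Fin.strictMono_castSucc.monotone) hk ⟨hb.1, hb'⟩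
      exact ⟨j.castSucc, hj⟩
    · exact ⟨Fin.last k, (not_le.1 hb').le, hb.2⟩

theorem T_maps_CE_to_CE_general (n m : ℕ) (hn : 0 < n) (hm : 0 < m)
    (x : Fin (n + 1) → ℝ) (y : Fin (m + 1) → ℝ)
    (hx : StrictMono x) (hy : StrictMono y)
    -- the horizontal and vertical contraction homeomorphisms and their inverses
    (Lx' : Fin n → ℝ → ℝ) (Ly' : Fin m → ℝ → ℝ)
    -- vertical scaling factors, Lipschitz, |s| < 1, vanishing on ∂E_{ij}
    (s : Fin n → Fin m → ℝ × ℝ → ℝ)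
    (hsbdx : ∀ i j, ∀ b ∈ Icc (y j.castSucc) (y j.succ),
      s i j (x i.castSucc, b) = 0 ∧ s i j (x i.succ, b) = 0)
    (hsbdy : ∀ i j, ∀ a ∈ Icc (x i.castSucc) (x i.succ),
      s i j (a, y j.castSucc) = 0 ∧ s i j (a, y j.succ) = 0)
    -- the Lipschitz functions g_{ij} on E
    (g : Fin n → Fin m → ℝ × ℝ → ℝ)
    -- interpolation curves q_α, r_β of the column/row data
    (q : Fin (n + 1) → ℝ → ℝ) (r : Fin (m + 1) → ℝ → ℝ)
    -- the Lipschitz functions h_{ij} with prescribed boundary curves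
    (h : Fin n → Fin m → ℝ × ℝ → ℝ)
    (hhq : ∀ i j, ∀ b ∈ Icc (y j.castSucc) (y j.succ),
      h i j (x i.castSucc, b) = q i.castSucc b ∧ h i j (x i.succ, b) = q i.succ b)
    (hhr : ∀ i j, ∀ a ∈ Icc (x i.castSucc) (x i.succ),
      h i j (a, y j.castSucc) = r j.castSucc a ∧ h i j (a, y j.succ) = r j.succ a)
    -- a member φ of C(E)
    (φ : ℝ × ℝ → ℝ)
    -- Tφ defined piecewise on the subrectangles
    (Tφ : ℝ × ℝ → ℝ)
    (hT : ∀ i j, ∀ p ∈ Icc (x i.castSucc) (x i.succ) ×ˢ Icc (y j.castSucc) (y j.succ),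
      Tφ p = s i j p * (φ (Lx' i p.1, Ly' j p.2) - g i j (Lx' i p.1, Ly' j p.2)) +
        h i j p) :
    (∀ α, ∀ b ∈ Icc (y 0) (y (Fin.last m)), Tφ (x α, b) = q α b) ∧
    (∀ β, ∀ a ∈ Icc (x 0) (x (Fin.last n)), Tφ (a, y β) = r β a) := by
  refine ⟨fun α b hb => ?_, fun β a ha => ?_⟩
  · obtain ⟨i, hi⟩ := Fin.exists_castSucc_eq_or_succ_eq hn α
    obtain ⟨j, hb⟩ := hy.monotone.exists_mem_Icc_castSucc_succ hm hb
    have hxi := hx.monotone i.castSucc_le_succ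
    rcases hi with rfl | rfl
    · rw [hT i j _ ⟨left_mem_Icc.2 hxi, hb⟩, (hsbdx i j b hb).1, (hhq i j b hb).1, zero_mul,
        zero_add]
    · rw [hT i j _ ⟨right_mem_Icc.2 hxi, hb⟩, (hsbdx i j b hb).2, (hhq i j b hb).2, zero_mul,
        zero_add]
  · obtain ⟨j, hj⟩ := Fin.exists_castSucc_eq_or_succ_eq hm β
    obtain ⟨i, ha⟩ := hx.monotone.exists_mem_Icc_castSucc_succ hn ha
    have hyj := hy.monotone j.castSucc_le_succ
    rcases hj with rfl | rfl
    · rw [hT i j _ ⟨ha, left_mem_Icc.2 hyj⟩, (hsbdy i j a ha).1, (hhr i j a ha).1, zero_mul,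
        zero_add]
    · rw [hT i j _ ⟨ha, right_mem_Icc.2 hyj⟩, (hsbdy i j a ha).2, (hhr i j a ha).2, zero_mul,
        zero_add]

/-- The operator `T` maps `C(E)` into `C(E)`: for `φ ∈ C(E)`, the function `Tφ`
restricted to each grid line `{x_α} × I_y` equals `q_α`, and restricted to each
`I_x × {y_β}` equals `r_β`. -/
theorem T_maps_CE_to_CE (n m : ℕ) (hn : 0 < n) (hm : 0 < m)
    (x : Fin (n + 1) → ℝ) (y : Fin (m + 1) → ℝ)
    (hx : StrictMono x) (hy : StrictMono y)
    (z : Fin (n + 1) → Fin (m + 1) → ℝ)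
    -- the horizontal and vertical contraction homeomorphisms and their inverses
    (Lx Lx' : Fin n → ℝ → ℝ) (Ly Ly' : Fin m → ℝ → ℝ)
    (hLxmap : ∀ i, MapsTo (Lx i) (Icc (x 0) (x (Fin.last n)))
      (Icc (x i.castSucc) (x i.succ)))
    (hLx'map : ∀ i, MapsTo (Lx' i) (Icc (x i.castSucc) (x i.succ))
      (Icc (x 0) (x (Fin.last n))))
    (hLxinv : ∀ i, ∀ t ∈ Icc (x 0) (x (Fin.last n)), Lx' i (Lx i t) = t)
    (hLxinv' : ∀ i, ∀ t ∈ Icc (x i.castSucc) (x i.succ), Lx i (Lx' i t) = t)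
    (hLxcont : ∀ i, ContinuousOn (Lx i) (Icc (x 0) (x (Fin.last n))))
    (hLx'cont : ∀ i, ContinuousOn (Lx' i) (Icc (x i.castSucc) (x i.succ)))
    (hLxcontr : ∀ i, ∃ c : ℝ, c < 1 ∧ ∀ t ∈ Icc (x 0) (x (Fin.last n)),
      ∀ t' ∈ Icc (x 0) (x (Fin.last n)), |Lx i t - Lx i t'| ≤ c * |t - t'|)
    (hLxend : ∀ i, (Lx i (x 0) = x i.castSucc ∧ Lx i (x (Fin.last n)) = x i.succ) ∨
      (Lx i (x 0) = x i.succ ∧ Lx i (x (Fin.last n)) = x i.castSucc))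
    (hLymap : ∀ j, MapsTo (Ly j) (Icc (y 0) (y (Fin.last m)))
      (Icc (y j.castSucc) (y j.succ)))
    (hLy'map : ∀ j, MapsTo (Ly' j) (Icc (y j.castSucc) (y j.succ))
      (Icc (y 0) (y (Fin.last m))))
    (hLyinv : ∀ j, ∀ t ∈ Icc (y 0) (y (Fin.last m)), Ly' j (Ly j t) = t)
    (hLyinv' : ∀ j, ∀ t ∈ Icc (y j.castSucc) (y j.succ), Ly j (Ly' j t) = t)
    (hLycont : ∀ j, ContinuousOn (Ly j) (Icc (y 0) (y (Fin.last m))))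
    (hLy'cont : ∀ j, ContinuousOn (Ly' j) (Icc (y j.castSucc) (y j.succ)))
    (hLycontr : ∀ j, ∃ c : ℝ, c < 1 ∧ ∀ t ∈ Icc (y 0) (y (Fin.last m)),
      ∀ t' ∈ Icc (y 0) (y (Fin.last m)), |Ly j t - Ly j t'| ≤ c * |t - t'|)
    (hLyend : ∀ j, (Ly j (y 0) = y j.castSucc ∧ Ly j (y (Fin.last m)) = y j.succ) ∨
      (Ly j (y 0) = y j.succ ∧ Ly j (y (Fin.last m)) = y j.castSucc))
    -- vertical scaling factors, Lipschitz, |s| < 1, vanishing on ∂E_{ij}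
    (s : Fin n → Fin m → ℝ × ℝ → ℝ)
    (hslip : ∀ i j, ∃ K : NNReal, LipschitzOnWith K (s i j)
      (Icc (x i.castSucc) (x i.succ) ×ˢ Icc (y j.castSucc) (y j.succ)))
    (hs1 : ∀ i j, ∀ p ∈ Icc (x i.castSucc) (x i.succ) ×ˢ Icc (y j.castSucc) (y j.succ),
      |s i j p| < 1)
    (hsbdx : ∀ i j, ∀ b ∈ Icc (y j.castSucc) (y j.succ),
      s i j (x i.castSucc, b) = 0 ∧ s i j (x i.succ, b) = 0)
    (hsbdy : ∀ i j, ∀ a ∈ Icc (x i.castSucc) (x i.succ),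
      s i j (a, y j.castSucc) = 0 ∧ s i j (a, y j.succ) = 0)
    -- the Lipschitz functions g_{ij} on E
    (g : Fin n → Fin m → ℝ × ℝ → ℝ)
    (hglip : ∀ i j, ∃ K : NNReal, LipschitzOnWith K (g i j)
      (Icc (x 0) (x (Fin.last n)) ×ˢ Icc (y 0) (y (Fin.last m))))
    -- interpolation curves q_α, r_β of the column/row data
    (q : Fin (n + 1) → ℝ → ℝ) (r : Fin (m + 1) → ℝ → ℝ)
    (hqcont : ∀ α, ContinuousOn (q α) (Icc (y 0) (y (Fin.last m))))
    (hrcont : ∀ β, ContinuousOn (r β) (Icc (x 0) (x (Fin.last n))))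
    (hqdata : ∀ α β, q α (y β) = z α β) (hrdata : ∀ α β, r β (x α) = z α β)
    -- the Lipschitz functions h_{ij} with prescribed boundary curves
    (h : Fin n → Fin m → ℝ × ℝ → ℝ)
    (hhlip : ∀ i j, ∃ K : NNReal, LipschitzOnWith K (h i j)
      (Icc (x i.castSucc) (x i.succ) ×ˢ Icc (y j.castSucc) (y j.succ)))
    (hhq : ∀ i j, ∀ b ∈ Icc (y j.castSucc) (y j.succ),
      h i j (x i.castSucc, b) = q i.castSucc b ∧ h i j (x i.succ, b) = q i.succ b)
    (hhr : ∀ i j, ∀ a ∈ Icc (x i.castSucc) (x i.succ),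
      h i j (a, y j.castSucc) = r j.castSucc a ∧ h i j (a, y j.succ) = r j.succ a)
    -- a member φ of C(E)
    (φ : ℝ × ℝ → ℝ)
    (hφcont : ContinuousOn φ (Icc (x 0) (x (Fin.last n)) ×ˢ Icc (y 0) (y (Fin.last m))))
    (hφq : ∀ α, ∀ b ∈ Icc (y 0) (y (Fin.last m)), φ (x α, b) = q α b)
    (hφr : ∀ β, ∀ a ∈ Icc (x 0) (x (Fin.last n)), φ (a, y β) = r β a)
    -- Tφ defined piecewise on the subrectangles
    (Tφ : ℝ × ℝ → ℝ)
    (hT : ∀ i j, ∀ p ∈ Icc (x i.castSucc) (x i.succ) ×ˢ Icc (y j.castSucc) (y j.succ),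
      Tφ p = s i j p * (φ (Lx' i p.1, Ly' j p.2) - g i j (Lx' i p.1, Ly' j p.2)) +
        h i j p) :
    (∀ α, ∀ b ∈ Icc (y 0) (y (Fin.last m)), Tφ (x α, b) = q α b) ∧
    (∀ β, ∀ a ∈ Icc (x 0) (x (Fin.last n)), Tφ (a, y β) = r β a) :=
  T_maps_CE_to_CE_general n m hn hm x y hx hy Lx' Ly' s hsbdx hsbdy g q r h hhq hhr φ Tφ hT
end

section
/- Under the hypotheses of the construction, there exists a unique continuous function f ∈ C(E) satisfying the self-affinity functional equation f(x,y) = s_{ij}(x,y)·(f(L_{ij}⁻¹(x,y)) − g_{ij}(L_{ij}⁻¹(x,y))) + h_{ij}(x,y) for all (x,y) ∈ E_{ij} and all (i,j); moreover f interpolates the data: f(x_i, y_j) = z_{ij} for all grid points. -/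
/-! On `E_{ij}` put `T f = s_{ij} (f ∘ L_{ij}⁻¹ - g_{ij} ∘ L_{ij}⁻¹) + h_{ij}`. Where two
subrectangles meet, `s` vanishes on both and both pieces reduce to the common boundary curve
`q_α` or `r_β`, so the pieces glue to a continuous function and `T` maps `C(E)` to itself. By
compactness `|s_{ij}| ≤ c < 1` uniformly, so `T` is a contraction for the sup metric and has a
unique fixed point. The same vanishing of `s` forces every solution of the functional equation to
equal `q_α`, `r_β` on the grid lines, hence `z_{αβ}` at the grid points. -/

open Set Function

open scoped NNReal

theorem IsCompact.exists_bound_lt_one_of_abs_lt_one {X : Type*} [TopologicalSpace X]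
    {K : Set X} (hK : IsCompact K) {s : X → ℝ} (hs : ContinuousOn s K)
    (hs1 : ∀ p ∈ K, |s p| < 1) : ∃ c : ℝ≥0, c < 1 ∧ ∀ p ∈ K, |s p| ≤ c := by
  rcases K.eq_empty_or_nonempty with rfl | hne
  · exact ⟨0, zero_lt_one, fun p hp => hp.elim⟩
  obtain ⟨p₀, hp₀, hmax⟩ := hK.exists_isMaxOn hne hs.abs
  exact ⟨⟨|s p₀|, abs_nonneg _⟩, by exact_mod_cast hs1 p₀ hp₀, fun p hp => hmax hp⟩

theorem exists_bound_lt_one_of_abs_lt_one {ι X : Type*} [Fintype ι] [TopologicalSpace X]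
    {K : ι → Set X} (hK : ∀ k, IsCompact (K k)) {s : ι → X → ℝ}
    (hs : ∀ k, ContinuousOn (s k) (K k)) (hs1 : ∀ k, ∀ p ∈ K k, |s k p| < 1) :
    ∃ c : ℝ≥0, c < 1 ∧ ∀ k, ∀ p ∈ K k, |s k p| ≤ c := by
  choose c hc1 hc using fun k => (hK k).exists_bound_lt_one_of_abs_lt_one (hs k) (hs1 k)
  refine ⟨Finset.univ.sup c, (Finset.sup_lt_iff zero_lt_one).2 fun k _ => hc1 k,
    fun k p hp => (hc k p hp).trans ?_⟩
  exact_mod_cast Finset.le_sup (Finset.mem_univ k)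

theorem exists_unique_continuousOn_eqOn_of_contraction {X : Type*} [TopologicalSpace X]
    {K : Set X} (hK : IsCompact K) {Φ : (X → ℝ) → X → ℝ} {c : ℝ≥0} (hc : c < 1)
    (hΦc : ∀ f, ContinuousOn f K → ContinuousOn (Φ f) K)
    (hΦ : ∀ f f', ∀ p ∈ K, ∃ w ∈ K, |Φ f p - Φ f' p| ≤ c * |f w - f' w|) :
    ∃ f, (ContinuousOn f K ∧ EqOn f (Φ f) K) ∧
      ∀ f', ContinuousOn f' K → EqOn f' (Φ f') K → EqOn f f' K := by
  classical
  have := isCompact_iff_compactSpace.mp hK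
  -- `Φ` only sees `f` on `K`, so it descends to `C(K, ℝ)` through any extension.
  have hΦ_congr : ∀ {f f'}, EqOn f f' K → EqOn (Φ f) (Φ f') K := fun {f f'} hff' p hp => by
    obtain ⟨w, hw, hle⟩ := hΦ f f' p hp
    rw [hff' hw, sub_self, abs_zero, mul_zero] at hle
    exact sub_eq_zero.1 (abs_nonpos_iff.1 hle)
  let extend : C(K, ℝ) → X → ℝ := fun φ p => if hp : p ∈ K then φ ⟨p, hp⟩ else 0
  have extend_apply : ∀ φ (p : K), extend φ p = φ p := fun φ p => dif_pos p.2
  have hext : ∀ φ, ContinuousOn (extend φ) K := fun φ =>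
    continuousOn_iff_continuous_domRestrict.2 <| by
      convert φ.continuous using 1
      exact funext (extend_apply φ)
  let T : C(K, ℝ) → C(K, ℝ) := fun φ => ⟨K.domRestrict (Φ (extend φ)), (hΦc _ (hext φ)).domRestrict⟩
  have hT : ContractingWith c T := by
    refine ⟨hc, LipschitzWith.of_dist_le_mul fun φ ψ =>
      (ContinuousMap.dist_le (by positivity)).2 fun p => ?_⟩
    obtain ⟨w, hw, hle⟩ := hΦ (extend φ) (extend ψ) p p.2
    calc dist (T φ p) (T ψ p) = |Φ (extend φ) p - Φ (extend ψ) p| := Real.dist_eq _ _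
      _ ≤ c * dist (φ ⟨w, hw⟩) (ψ ⟨w, hw⟩) := by
        rwa [Real.dist_eq, ← extend_apply, ← extend_apply]
      _ ≤ c * dist φ ψ := by gcongr; exact ContinuousMap.dist_apply_le_dist _
  have hfix : ∀ f (hf : ContinuousOn f K), EqOn f (Φ f) K →
      IsFixedPt T ⟨K.domRestrict f, hf.domRestrict⟩ := fun f hf hfΦ =>
    ContinuousMap.ext fun p =>
      ((hΦ_congr fun q hq => extend_apply _ ⟨q, hq⟩) p.2).trans (hfΦ p.2).symm
  obtain ⟨φ₀, hφ₀⟩ : ∃ φ, IsFixedPt T φ := ⟨_, hT.fixedPoint_isFixedPt⟩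
  refine ⟨extend φ₀, ⟨hext φ₀, fun p hp => ?_⟩, fun f' hf'c hf' p hp => ?_⟩
  · calc extend φ₀ p = φ₀ ⟨p, hp⟩ := extend_apply φ₀ ⟨p, hp⟩
      _ = T φ₀ ⟨p, hp⟩ := by rw [hφ₀.eq]
  · rw [extend_apply φ₀ ⟨p, hp⟩, hT.fixedPoint_unique' hφ₀ (hfix f' hf'c hf')]
    rfl

theorem exists_unique_continuousOn_eq_piece_of_contraction {ι X : Type*} [Finite ι]
    [TopologicalSpace X] {K : Set X} (hK : IsCompact K) {R : ι → Set X}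
    (hR : ∀ k, IsClosed (R k)) (hRK : ⋃ k, R k = K) {F : ι → (X → ℝ) → X → ℝ} {c : ℝ≥0}
    (hc : c < 1) (hagree : ∀ f k l, ∀ p ∈ R k, p ∈ R l → F k f p = F l f p)
    (hFc : ∀ f, ContinuousOn f K → ∀ k, ContinuousOn (F k f) (R k))
    (hF : ∀ f f' k, ∀ p ∈ R k, ∃ w ∈ K, |F k f p - F k f' p| ≤ c * |f w - f' w|) :
    ∃ f, (ContinuousOn f K ∧ ∀ k, ∀ p ∈ R k, f p = F k f p) ∧
      ∀ f', ContinuousOn f' K → (∀ k, ∀ p ∈ R k, f' p = F k f' p) → EqOn f f' K := by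
  classical
  have hmem : ∀ {p}, p ∈ K → ∃ k, p ∈ R k := fun hp => mem_iUnion.1 (hRK ▸ hp)
  let Φ : (X → ℝ) → X → ℝ := fun f p => if hp : ∃ k, p ∈ R k then F hp.choose f p else 0
  have hΦ : ∀ f k, EqOn (Φ f) (F k f) (R k) := fun f k p hp => by
    have hp' : ∃ k, p ∈ R k := ⟨k, hp⟩
    simp only [Φ, dif_pos hp']
    exact hagree f _ _ p hp'.choose_spec hp
  obtain ⟨f, ⟨hfc, hfix⟩, huniq⟩ := exists_unique_continuousOn_eqOn_of_contraction hK hc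
    (fun f hf => hRK ▸ (locallyFinite_of_finite R).continuousOn_iUnion hR
      fun k => (hFc f hf k).congr (hΦ f k))
    (fun f f' p hp => by
      obtain ⟨k, hk⟩ := hmem hp
      rw [hΦ f k hk, hΦ f' k hk]
      exact hF f f' k p hk)
  refine ⟨f, ⟨hfc, fun k p hp => (hfix (hRK ▸ mem_iUnion_of_mem k hp)).trans (hΦ f k hp)⟩,
    fun f' hf'c hf' => huniq f' hf'c fun p hp => ?_⟩
  obtain ⟨k, hk⟩ := hmem hp
  exact (hf' k p hk).trans (hΦ f' k hk).symm

section Grid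

variable {n : ℕ} {x : Fin (n + 1) → ℝ}

theorem Monotone.mem_Icc_zero_last (hx : Monotone x) (α : Fin (n + 1)) :
    x α ∈ Icc (x 0) (x (Fin.last n)) :=
  ⟨hx (Fin.zero_le α), hx (Fin.le_last α)⟩

theorem Monotone.iUnion_Icc_castSucc_succ (hx : Monotone x) (hn : 0 < n) :
    ⋃ i : Fin n, Icc (x i.castSucc) (x i.succ) = Icc (x 0) (x (Fin.last n)) := by
  refine Subset.antisymm (iUnion_subset fun i => Icc_subset_Icc (hx.mem_Icc_zero_last _).1
    (hx.mem_Icc_zero_last _).2) fun t ht => ?_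
  obtain ⟨i, hi, hmax⟩ := (Finset.univ.filter fun i : Fin n => x i.castSucc ≤ t).exists_max_image
    id ⟨⟨0, hn⟩, by simpa using ht.1⟩
  rw [Finset.mem_filter] at hi
  refine mem_iUnion.2 ⟨i, hi.2, not_lt.1 fun hlt => ?_⟩
  rcases i.succ.eq_castSucc_or_eq_last with ⟨j, hj⟩ | hlast
  · have hji : j ≤ i := hmax j (Finset.mem_filter.2 ⟨Finset.mem_univ _, hj ▸ hlt.le⟩)
    exact (Fin.castSucc_lt_succ (i := i)).not_ge (hj ▸ Fin.castSucc_le_castSucc_iff.2 hji)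
  · exact (hlast ▸ hlt).not_ge ht.2

theorem Monotone.exists_eq_of_mem_Icc_castSucc_succ_of_ne (hx : Monotone x) {i k : Fin n}
    (hik : i ≠ k) {t : ℝ} (hi : t ∈ Icc (x i.castSucc) (x i.succ))
    (hk : t ∈ Icc (x k.castSucc) (x k.succ)) : ∃ α, t = x α := by
  wlog hlt : i < k generalizing i k
  · exact this hik.symm hk hi ((Ne.symm hik).lt_of_le (not_lt.1 hlt))
  exact ⟨i.succ, le_antisymm hi.2 ((hx (Fin.succ_le_castSucc_iff.2 hlt)).trans hk.1)⟩

theorem StrictMono.eq_castSucc_or_eq_succ_of_mem_Icc (hx : StrictMono x) {i : Fin n}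
    {α : Fin (n + 1)} (hα : x α ∈ Icc (x i.castSucc) (x i.succ)) :
    α = i.castSucc ∨ α = i.succ := by
  have h₁ := Fin.le_def.1 (hx.le_iff_le.1 hα.1)
  have h₂ := Fin.le_def.1 (hx.le_iff_le.1 hα.2)
  simp only [Fin.val_castSucc, Fin.val_succ] at h₁ h₂
  simp only [Fin.ext_iff, Fin.val_castSucc, Fin.val_succ]
  omega

end Grid

theorem iUnion_Icc_castSucc_succ_prod {n m : ℕ} {x : Fin (n + 1) → ℝ} {y : Fin (m + 1) → ℝ}
    (hx : Monotone x) (hy : Monotone y) (hn : 0 < n) (hm : 0 < m) :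
    ⋃ ij : Fin n × Fin m,
        Icc (x ij.1.castSucc) (x ij.1.succ) ×ˢ Icc (y ij.2.castSucc) (y ij.2.succ) =
      Icc (x 0) (x (Fin.last n)) ×ˢ Icc (y 0) (y (Fin.last m)) := by
  rw [iUnion_prod (fun i : Fin n => Icc (x i.castSucc) (x i.succ))
    fun j : Fin m => Icc (y j.castSucc) (y j.succ), hx.iUnion_Icc_castSucc_succ hn,
    hy.iUnion_Icc_castSucc_succ hm]

def selfAffinePiece (s g h : ℝ × ℝ → ℝ) (Lx' Ly' : ℝ → ℝ) (f : ℝ × ℝ → ℝ) (p : ℝ × ℝ) : ℝ :=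
  s p * (f (Lx' p.1, Ly' p.2) - g (Lx' p.1, Ly' p.2)) + h p

section SelfAffinePiece

variable {s g h : ℝ × ℝ → ℝ} {Lx' Ly' : ℝ → ℝ}

theorem selfAffinePiece_of_eq_zero {f : ℝ × ℝ → ℝ} {p : ℝ × ℝ} (hs : s p = 0) :
    selfAffinePiece s g h Lx' Ly' f p = h p := by
  simp [selfAffinePiece, hs]

theorem abs_selfAffinePiece_sub_le {c : ℝ} {f f' : ℝ × ℝ → ℝ} {p : ℝ × ℝ} (hs : |s p| ≤ c) :
    |selfAffinePiece s g h Lx' Ly' f p - selfAffinePiece s g h Lx' Ly' f' p| ≤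
      c * |f (Lx' p.1, Ly' p.2) - f' (Lx' p.1, Ly' p.2)| := by
  rw [show selfAffinePiece s g h Lx' Ly' f p - selfAffinePiece s g h Lx' Ly' f' p =
      s p * (f (Lx' p.1, Ly' p.2) - f' (Lx' p.1, Ly' p.2)) by unfold selfAffinePiece; ring,
    abs_mul]
  exact mul_le_mul_of_nonneg_right hs (abs_nonneg _)

theorem ContinuousOn.selfAffinePiece {A B : Set ℝ} {E : Set (ℝ × ℝ)} {f : ℝ × ℝ → ℝ}
    (hs : ContinuousOn s (A ×ˢ B)) (hg : ContinuousOn g E) (hh : ContinuousOn h (A ×ˢ B))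
    (hLx' : ContinuousOn Lx' A) (hLy' : ContinuousOn Ly' B)
    (hL : MapsTo (fun p : ℝ × ℝ => (Lx' p.1, Ly' p.2)) (A ×ˢ B) E) (hf : ContinuousOn f E) :
    ContinuousOn (selfAffinePiece s g h Lx' Ly' f) (A ×ˢ B) :=
  (hs.mul ((hf.comp (hLx'.prodMap hLy') hL).sub (hg.comp (hLx'.prodMap hLy') hL))).add hh

theorem selfAffinePiece_apply_vertical_edge {n : ℕ} {x : Fin (n + 1) → ℝ} (hx : StrictMono x)
    {q : Fin (n + 1) → ℝ → ℝ} {i : Fin n} {B : Set ℝ}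
    (hs : ∀ b ∈ B, s (x i.castSucc, b) = 0 ∧ s (x i.succ, b) = 0)
    (hh : ∀ b ∈ B, h (x i.castSucc, b) = q i.castSucc b ∧ h (x i.succ, b) = q i.succ b)
    {α : Fin (n + 1)} {b : ℝ} (hα : x α ∈ Icc (x i.castSucc) (x i.succ)) (hb : b ∈ B)
    (f : ℝ × ℝ → ℝ) : selfAffinePiece s g h Lx' Ly' f (x α, b) = q α b := by
  rcases hx.eq_castSucc_or_eq_succ_of_mem_Icc hα with rfl | rfl
  · rw [selfAffinePiece_of_eq_zero (hs b hb).1, (hh b hb).1]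
  · rw [selfAffinePiece_of_eq_zero (hs b hb).2, (hh b hb).2]

theorem selfAffinePiece_apply_horizontal_edge {m : ℕ} {y : Fin (m + 1) → ℝ} (hy : StrictMono y)
    {r : Fin (m + 1) → ℝ → ℝ} {j : Fin m} {A : Set ℝ}
    (hs : ∀ a ∈ A, s (a, y j.castSucc) = 0 ∧ s (a, y j.succ) = 0)
    (hh : ∀ a ∈ A, h (a, y j.castSucc) = r j.castSucc a ∧ h (a, y j.succ) = r j.succ a)
    {β : Fin (m + 1)} {a : ℝ} (ha : a ∈ A) (hβ : y β ∈ Icc (y j.castSucc) (y j.succ))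
    (f : ℝ × ℝ → ℝ) : selfAffinePiece s g h Lx' Ly' f (a, y β) = r β a := by
  rcases hy.eq_castSucc_or_eq_succ_of_mem_Icc hβ with rfl | rfl
  · rw [selfAffinePiece_of_eq_zero (hs a ha).1, (hh a ha).1]
  · rw [selfAffinePiece_of_eq_zero (hs a ha).2, (hh a ha).2]

end SelfAffinePiece

section GridOperator

variable {n m : ℕ} {x : Fin (n + 1) → ℝ} {y : Fin (m + 1) → ℝ} {Lx' : Fin n → ℝ → ℝ}
  {Ly' : Fin m → ℝ → ℝ} {s g h : Fin n → Fin m → ℝ × ℝ → ℝ} {q : Fin (n + 1) → ℝ → ℝ}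
  {r : Fin (m + 1) → ℝ → ℝ}

theorem selfAffinePiece_eq_of_mem_of_mem (hx : StrictMono x) (hy : StrictMono y)
    (hsbdx : ∀ i j, ∀ b ∈ Icc (y j.castSucc) (y j.succ),
      s i j (x i.castSucc, b) = 0 ∧ s i j (x i.succ, b) = 0)
    (hsbdy : ∀ i j, ∀ a ∈ Icc (x i.castSucc) (x i.succ),
      s i j (a, y j.castSucc) = 0 ∧ s i j (a, y j.succ) = 0)
    (hhq : ∀ i j, ∀ b ∈ Icc (y j.castSucc) (y j.succ),
      h i j (x i.castSucc, b) = q i.castSucc b ∧ h i j (x i.succ, b) = q i.succ b)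
    (hhr : ∀ i j, ∀ a ∈ Icc (x i.castSucc) (x i.succ),
      h i j (a, y j.castSucc) = r j.castSucc a ∧ h i j (a, y j.succ) = r j.succ a)
    (f : ℝ × ℝ → ℝ) {i k : Fin n} {j l : Fin m} {p : ℝ × ℝ}
    (hp : p ∈ Icc (x i.castSucc) (x i.succ) ×ˢ Icc (y j.castSucc) (y j.succ))
    (hp' : p ∈ Icc (x k.castSucc) (x k.succ) ×ˢ Icc (y l.castSucc) (y l.succ)) :
    selfAffinePiece (s i j) (g i j) (h i j) (Lx' i) (Ly' j) f p =
      selfAffinePiece (s k l) (g k l) (h k l) (Lx' k) (Ly' l) f p := by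
  obtain ⟨a, b⟩ := p
  rcases eq_or_ne i k with rfl | hik
  · rcases eq_or_ne j l with rfl | hjl
    · rfl
    obtain ⟨β, rfl⟩ := hy.monotone.exists_eq_of_mem_Icc_castSucc_succ_of_ne hjl hp.2 hp'.2
    rw [selfAffinePiece_apply_horizontal_edge hy (hsbdy i j) (hhr i j) hp.1 hp.2,
      selfAffinePiece_apply_horizontal_edge hy (hsbdy i l) (hhr i l) hp'.1 hp'.2]
  obtain ⟨α, rfl⟩ := hx.monotone.exists_eq_of_mem_Icc_castSucc_succ_of_ne hik hp.1 hp'.1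
  rw [selfAffinePiece_apply_vertical_edge hx (hsbdx i j) (hhq i j) hp.1 hp.2,
    selfAffinePiece_apply_vertical_edge hx (hsbdx k l) (hhq k l) hp'.1 hp'.2]

theorem apply_vertical_gridLine_of_selfAffine (hn : 0 < n) (hm : 0 < m) (hx : StrictMono x)
    (hy : Monotone y)
    (hsbdx : ∀ i j, ∀ b ∈ Icc (y j.castSucc) (y j.succ),
      s i j (x i.castSucc, b) = 0 ∧ s i j (x i.succ, b) = 0)
    (hhq : ∀ i j, ∀ b ∈ Icc (y j.castSucc) (y j.succ),
      h i j (x i.castSucc, b) = q i.castSucc b ∧ h i j (x i.succ, b) = q i.succ b)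
    {f : ℝ × ℝ → ℝ}
    (hf : ∀ i j, ∀ p ∈ Icc (x i.castSucc) (x i.succ) ×ˢ Icc (y j.castSucc) (y j.succ),
      f p = selfAffinePiece (s i j) (g i j) (h i j) (Lx' i) (Ly' j) f p)
    (α : Fin (n + 1)) {b : ℝ} (hb : b ∈ Icc (y 0) (y (Fin.last m))) : f (x α, b) = q α b := by
  obtain ⟨i, hi⟩ := mem_iUnion.1 <|
    (hx.monotone.iUnion_Icc_castSucc_succ hn).superset (hx.monotone.mem_Icc_zero_last α)
  obtain ⟨j, hj⟩ := mem_iUnion.1 <| (hy.iUnion_Icc_castSucc_succ hm).superset hb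
  exact (hf i j _ ⟨hi, hj⟩).trans
    (selfAffinePiece_apply_vertical_edge hx (hsbdx i j) (hhq i j) hi hj f)

theorem apply_horizontal_gridLine_of_selfAffine (hn : 0 < n) (hm : 0 < m) (hx : Monotone x)
    (hy : StrictMono y)
    (hsbdy : ∀ i j, ∀ a ∈ Icc (x i.castSucc) (x i.succ),
      s i j (a, y j.castSucc) = 0 ∧ s i j (a, y j.succ) = 0)
    (hhr : ∀ i j, ∀ a ∈ Icc (x i.castSucc) (x i.succ),
      h i j (a, y j.castSucc) = r j.castSucc a ∧ h i j (a, y j.succ) = r j.succ a)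
    {f : ℝ × ℝ → ℝ}
    (hf : ∀ i j, ∀ p ∈ Icc (x i.castSucc) (x i.succ) ×ˢ Icc (y j.castSucc) (y j.succ),
      f p = selfAffinePiece (s i j) (g i j) (h i j) (Lx' i) (Ly' j) f p)
    (β : Fin (m + 1)) {a : ℝ} (ha : a ∈ Icc (x 0) (x (Fin.last n))) : f (a, y β) = r β a := by
  obtain ⟨i, hi⟩ := mem_iUnion.1 <| (hx.iUnion_Icc_castSucc_succ hn).superset ha
  obtain ⟨j, hj⟩ := mem_iUnion.1 <|
    (hy.monotone.iUnion_Icc_castSucc_succ hm).superset (hy.monotone.mem_Icc_zero_last β)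
  exact (hf i j _ ⟨hi, hj⟩).trans
    (selfAffinePiece_apply_horizontal_edge hy (hsbdy i j) (hhr i j) hi hj f)

end GridOperator

theorem exists_unique_fractal_interpolation_function_general (n m : ℕ) (hn : 0 < n) (hm : 0 < m)
    (x : Fin (n + 1) → ℝ) (y : Fin (m + 1) → ℝ)
    (hx : StrictMono x) (hy : StrictMono y)
    (z : Fin (n + 1) → Fin (m + 1) → ℝ)
    -- the horizontal and vertical contraction homeomorphisms and their inverses
    (Lx' : Fin n → ℝ → ℝ) (Ly' : Fin m → ℝ → ℝ)
    (hLx'map : ∀ i, MapsTo (Lx' i) (Icc (x i.castSucc) (x i.succ))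
      (Icc (x 0) (x (Fin.last n))))
    (hLx'cont : ∀ i, ContinuousOn (Lx' i) (Icc (x i.castSucc) (x i.succ)))
    (hLy'map : ∀ j, MapsTo (Ly' j) (Icc (y j.castSucc) (y j.succ))
      (Icc (y 0) (y (Fin.last m))))
    (hLy'cont : ∀ j, ContinuousOn (Ly' j) (Icc (y j.castSucc) (y j.succ)))
    -- vertical scaling factors, Lipschitz, |s| < 1, vanishing on ∂E_{ij}
    (s : Fin n → Fin m → ℝ × ℝ → ℝ)
    (hslip : ∀ i j, ∃ K : NNReal, LipschitzOnWith K (s i j)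
      (Icc (x i.castSucc) (x i.succ) ×ˢ Icc (y j.castSucc) (y j.succ)))
    (hs1 : ∀ i j, ∀ p ∈ Icc (x i.castSucc) (x i.succ) ×ˢ Icc (y j.castSucc) (y j.succ),
      |s i j p| < 1)
    (hsbdx : ∀ i j, ∀ b ∈ Icc (y j.castSucc) (y j.succ),
      s i j (x i.castSucc, b) = 0 ∧ s i j (x i.succ, b) = 0)
    (hsbdy : ∀ i j, ∀ a ∈ Icc (x i.castSucc) (x i.succ),
      s i j (a, y j.castSucc) = 0 ∧ s i j (a, y j.succ) = 0)
    -- the Lipschitz functions g_{ij} on E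
    (g : Fin n → Fin m → ℝ × ℝ → ℝ)
    (hglip : ∀ i j, ∃ K : NNReal, LipschitzOnWith K (g i j)
      (Icc (x 0) (x (Fin.last n)) ×ˢ Icc (y 0) (y (Fin.last m))))
    -- interpolation curves q_α, r_β of the column/row data
    (q : Fin (n + 1) → ℝ → ℝ) (r : Fin (m + 1) → ℝ → ℝ)
    (hqdata : ∀ α β, q α (y β) = z α β)
    -- the Lipschitz functions h_{ij} with prescribed boundary curves
    (h : Fin n → Fin m → ℝ × ℝ → ℝ)
    (hhlip : ∀ i j, ∃ K : NNReal, LipschitzOnWith K (h i j)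
      (Icc (x i.castSucc) (x i.succ) ×ˢ Icc (y j.castSucc) (y j.succ)))
    (hhq : ∀ i j, ∀ b ∈ Icc (y j.castSucc) (y j.succ),
      h i j (x i.castSucc, b) = q i.castSucc b ∧ h i j (x i.succ, b) = q i.succ b)
    (hhr : ∀ i j, ∀ a ∈ Icc (x i.castSucc) (x i.succ),
      h i j (a, y j.castSucc) = r j.castSucc a ∧ h i j (a, y j.succ) = r j.succ a) :
    ∃ f : ℝ × ℝ → ℝ,
      (ContinuousOn f (Icc (x 0) (x (Fin.last n)) ×ˢ Icc (y 0) (y (Fin.last m))) ∧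
        (∀ α, ∀ b ∈ Icc (y 0) (y (Fin.last m)), f (x α, b) = q α b) ∧
        (∀ β, ∀ a ∈ Icc (x 0) (x (Fin.last n)), f (a, y β) = r β a)) ∧
      (∀ i j, ∀ p ∈ Icc (x i.castSucc) (x i.succ) ×ˢ Icc (y j.castSucc) (y j.succ),
        f p = s i j p * (f (Lx' i p.1, Ly' j p.2) - g i j (Lx' i p.1, Ly' j p.2)) +
          h i j p) ∧
      (∀ α β, f (x α, y β) = z α β) ∧
      (∀ f' : ℝ × ℝ → ℝ,
        (ContinuousOn f' (Icc (x 0) (x (Fin.last n)) ×ˢ Icc (y 0) (y (Fin.last m))) ∧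
          (∀ α, ∀ b ∈ Icc (y 0) (y (Fin.last m)), f' (x α, b) = q α b) ∧
          (∀ β, ∀ a ∈ Icc (x 0) (x (Fin.last n)), f' (a, y β) = r β a)) →
        (∀ i j, ∀ p ∈ Icc (x i.castSucc) (x i.succ) ×ˢ Icc (y j.castSucc) (y j.succ),
          f' p = s i j p * (f' (Lx' i p.1, Ly' j p.2) - g i j (Lx' i p.1, Ly' j p.2)) +
            h i j p) →
        EqOn f f' (Icc (x 0) (x (Fin.last n)) ×ˢ Icc (y 0) (y (Fin.last m)))) := by
  let R : Fin n × Fin m → Set (ℝ × ℝ) := fun ij =>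
    Icc (x ij.1.castSucc) (x ij.1.succ) ×ˢ Icc (y ij.2.castSucc) (y ij.2.succ)
  obtain ⟨c, hc1, hsc⟩ := exists_bound_lt_one_of_abs_lt_one (K := R)
    (fun _ => isCompact_Icc.prod isCompact_Icc)
    (fun ij => (hslip ij.1 ij.2).choose_spec.continuousOn) (fun ij => hs1 ij.1 ij.2)
  obtain ⟨f, ⟨hfc, hfe⟩, huniq⟩ := exists_unique_continuousOn_eq_piece_of_contraction
    (F := fun ij =>
      selfAffinePiece (s ij.1 ij.2) (g ij.1 ij.2) (h ij.1 ij.2) (Lx' ij.1) (Ly' ij.2))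
    (isCompact_Icc.prod isCompact_Icc) (fun _ => isClosed_Icc.prod isClosed_Icc)
    (iUnion_Icc_castSucc_succ_prod hx.monotone hy.monotone hn hm) hc1
    (fun f _ _ _ hp hp' => selfAffinePiece_eq_of_mem_of_mem hx hy hsbdx hsbdy hhq hhr f hp hp')
    (fun f hf ij => (hslip ij.1 ij.2).choose_spec.continuousOn.selfAffinePiece
      (hglip ij.1 ij.2).choose_spec.continuousOn (hhlip ij.1 ij.2).choose_spec.continuousOn
      (hLx'cont ij.1) (hLy'cont ij.2) ((hLx'map ij.1).prodMap (hLy'map ij.2)) hf)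
    (fun f f' ij p hp => ⟨_, (hLx'map ij.1).prodMap (hLy'map ij.2) hp,
      abs_selfAffinePiece_sub_le (hsc ij p hp)⟩)
  have hfe' : ∀ i j, ∀ p ∈ R (i, j), f p =
      selfAffinePiece (s i j) (g i j) (h i j) (Lx' i) (Ly' j) f p := fun i j => hfe (i, j)
  have hq := apply_vertical_gridLine_of_selfAffine hn hm hx hy.monotone hsbdx hhq hfe'
  have hr := apply_horizontal_gridLine_of_selfAffine hn hm hx.monotone hy hsbdy hhr hfe'
  exact ⟨f, ⟨hfc, fun α b => hq α, fun β a => hr β⟩, hfe',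
    fun α β => (hq α (hy.monotone.mem_Icc_zero_last β)).trans (hqdata α β),
    fun f' ⟨hf'c, _, _⟩ hf'e => huniq f' hf'c fun ij => hf'e ij.1 ij.2⟩

/-- There exists a unique continuous function `f ∈ C(E)` satisfying the
self-affinity functional equation on each subrectangle `E_{ij}`; moreover `f`
interpolates the data `z` at the grid points. -/
theorem exists_unique_fractal_interpolation_function (n m : ℕ) (hn : 0 < n) (hm : 0 < m)
    (x : Fin (n + 1) → ℝ) (y : Fin (m + 1) → ℝ)
    (hx : StrictMono x) (hy : StrictMono y)
    (z : Fin (n + 1) → Fin (m + 1) → ℝ)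
    -- the horizontal and vertical contraction homeomorphisms and their inverses
    (Lx Lx' : Fin n → ℝ → ℝ) (Ly Ly' : Fin m → ℝ → ℝ)
    (hLxmap : ∀ i, MapsTo (Lx i) (Icc (x 0) (x (Fin.last n)))
      (Icc (x i.castSucc) (x i.succ)))
    (hLx'map : ∀ i, MapsTo (Lx' i) (Icc (x i.castSucc) (x i.succ))
      (Icc (x 0) (x (Fin.last n))))
    (hLxinv : ∀ i, ∀ t ∈ Icc (x 0) (x (Fin.last n)), Lx' i (Lx i t) = t)
    (hLxinv' : ∀ i, ∀ t ∈ Icc (x i.castSucc) (x i.succ), Lx i (Lx' i t) = t)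
    (hLxcont : ∀ i, ContinuousOn (Lx i) (Icc (x 0) (x (Fin.last n))))
    (hLx'cont : ∀ i, ContinuousOn (Lx' i) (Icc (x i.castSucc) (x i.succ)))
    (hLxcontr : ∀ i, ∃ c : ℝ, c < 1 ∧ ∀ t ∈ Icc (x 0) (x (Fin.last n)),
      ∀ t' ∈ Icc (x 0) (x (Fin.last n)), |Lx i t - Lx i t'| ≤ c * |t - t'|)
    (hLxend : ∀ i, (Lx i (x 0) = x i.castSucc ∧ Lx i (x (Fin.last n)) = x i.succ) ∨
      (Lx i (x 0) = x i.succ ∧ Lx i (x (Fin.last n)) = x i.castSucc))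
    (hLymap : ∀ j, MapsTo (Ly j) (Icc (y 0) (y (Fin.last m)))
      (Icc (y j.castSucc) (y j.succ)))
    (hLy'map : ∀ j, MapsTo (Ly' j) (Icc (y j.castSucc) (y j.succ))
      (Icc (y 0) (y (Fin.last m))))
    (hLyinv : ∀ j, ∀ t ∈ Icc (y 0) (y (Fin.last m)), Ly' j (Ly j t) = t)
    (hLyinv' : ∀ j, ∀ t ∈ Icc (y j.castSucc) (y j.succ), Ly j (Ly' j t) = t)
    (hLycont : ∀ j, ContinuousOn (Ly j) (Icc (y 0) (y (Fin.last m))))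
    (hLy'cont : ∀ j, ContinuousOn (Ly' j) (Icc (y j.castSucc) (y j.succ)))
    (hLycontr : ∀ j, ∃ c : ℝ, c < 1 ∧ ∀ t ∈ Icc (y 0) (y (Fin.last m)),
      ∀ t' ∈ Icc (y 0) (y (Fin.last m)), |Ly j t - Ly j t'| ≤ c * |t - t'|)
    (hLyend : ∀ j, (Ly j (y 0) = y j.castSucc ∧ Ly j (y (Fin.last m)) = y j.succ) ∨
      (Ly j (y 0) = y j.succ ∧ Ly j (y (Fin.last m)) = y j.castSucc))
    -- vertical scaling factors, Lipschitz, |s| < 1, vanishing on ∂E_{ij}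
    (s : Fin n → Fin m → ℝ × ℝ → ℝ)
    (hslip : ∀ i j, ∃ K : NNReal, LipschitzOnWith K (s i j)
      (Icc (x i.castSucc) (x i.succ) ×ˢ Icc (y j.castSucc) (y j.succ)))
    (hs1 : ∀ i j, ∀ p ∈ Icc (x i.castSucc) (x i.succ) ×ˢ Icc (y j.castSucc) (y j.succ),
      |s i j p| < 1)
    (hsbdx : ∀ i j, ∀ b ∈ Icc (y j.castSucc) (y j.succ),
      s i j (x i.castSucc, b) = 0 ∧ s i j (x i.succ, b) = 0)
    (hsbdy : ∀ i j, ∀ a ∈ Icc (x i.castSucc) (x i.succ),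
      s i j (a, y j.castSucc) = 0 ∧ s i j (a, y j.succ) = 0)
    -- the Lipschitz functions g_{ij} on E
    (g : Fin n → Fin m → ℝ × ℝ → ℝ)
    (hglip : ∀ i j, ∃ K : NNReal, LipschitzOnWith K (g i j)
      (Icc (x 0) (x (Fin.last n)) ×ˢ Icc (y 0) (y (Fin.last m))))
    -- interpolation curves q_α, r_β of the column/row data
    (q : Fin (n + 1) → ℝ → ℝ) (r : Fin (m + 1) → ℝ → ℝ)
    (hqcont : ∀ α, ContinuousOn (q α) (Icc (y 0) (y (Fin.last m))))
    (hrcont : ∀ β, ContinuousOn (r β) (Icc (x 0) (x (Fin.last n))))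
    (hqdata : ∀ α β, q α (y β) = z α β) (hrdata : ∀ α β, r β (x α) = z α β)
    -- the Lipschitz functions h_{ij} with prescribed boundary curves
    (h : Fin n → Fin m → ℝ × ℝ → ℝ)
    (hhlip : ∀ i j, ∃ K : NNReal, LipschitzOnWith K (h i j)
      (Icc (x i.castSucc) (x i.succ) ×ˢ Icc (y j.castSucc) (y j.succ)))
    (hhq : ∀ i j, ∀ b ∈ Icc (y j.castSucc) (y j.succ),
      h i j (x i.castSucc, b) = q i.castSucc b ∧ h i j (x i.succ, b) = q i.succ b)
    (hhr : ∀ i j, ∀ a ∈ Icc (x i.castSucc) (x i.succ),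
      h i j (a, y j.castSucc) = r j.castSucc a ∧ h i j (a, y j.succ) = r j.succ a)
    -- corner data matching for the boundary curves
    (hqz0 : ∀ α β, q α (y β) = z α β) :
    ∃ f : ℝ × ℝ → ℝ,
      (ContinuousOn f (Icc (x 0) (x (Fin.last n)) ×ˢ Icc (y 0) (y (Fin.last m))) ∧
        (∀ α, ∀ b ∈ Icc (y 0) (y (Fin.last m)), f (x α, b) = q α b) ∧
        (∀ β, ∀ a ∈ Icc (x 0) (x (Fin.last n)), f (a, y β) = r β a)) ∧
      (∀ i j, ∀ p ∈ Icc (x i.castSucc) (x i.succ) ×ˢ Icc (y j.castSucc) (y j.succ),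
        f p = s i j p * (f (Lx' i p.1, Ly' j p.2) - g i j (Lx' i p.1, Ly' j p.2)) +
          h i j p) ∧
      (∀ α β, f (x α, y β) = z α β) ∧
      (∀ f' : ℝ × ℝ → ℝ,
        (ContinuousOn f' (Icc (x 0) (x (Fin.last n)) ×ˢ Icc (y 0) (y (Fin.last m))) ∧
          (∀ α, ∀ b ∈ Icc (y 0) (y (Fin.last m)), f' (x α, b) = q α b) ∧
          (∀ β, ∀ a ∈ Icc (x 0) (x (Fin.last n)), f' (a, y β) = r β a)) →
        (∀ i j, ∀ p ∈ Icc (x i.castSucc) (x i.succ) ×ˢ Icc (y j.castSucc) (y j.succ),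
          f' p = s i j p * (f' (Lx' i p.1, Ly' j p.2) - g i j (Lx' i p.1, Ly' j p.2)) +
            h i j p) →
        EqOn f f' (Icc (x 0) (x (Fin.last n)) ×ˢ Icc (y 0) (y (Fin.last m)))) :=
  exists_unique_fractal_interpolation_function_general n m hn hm x y hx hy z Lx' Ly' hLx'map
    hLx'cont hLy'map hLy'cont s hslip hs1 hsbdx hsbdy g hglip q r hqdata h hhlip hhq hhr
end

section
/- The graph of the fixed point f equals the attractor of the iterated function system {W_{ij}}: since Gr(f) is a nonempty compact subset of R³ with Gr(f) = ⋃_{(i,j)} W_{ij}(Gr(f)) and each W_{ij} is a contraction with respect to a metric equivalent to the Euclidean metric, Gr(f) is the unique nonempty compact set A with A = ⋃_{(i,j)} W_{ij}(A). -/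
open Set

/-- The weighted taxicab metric ρ_θ on ℝ³ (coordinates grouped as ((x,y),z)). -/
noncomputable def rhoTheta (θ : ℝ) (p q : (ℝ × ℝ) × ℝ) : ℝ :=
  |p.1.1 - q.1.1| + |p.1.2 - q.1.2| + θ * |p.2 - q.2|

lemma rhoTheta_nonneg {θ : ℝ} (hθ : 0 < θ) (p q : (ℝ × ℝ) × ℝ) :
    0 ≤ rhoTheta θ p q := by
  unfold rhoTheta
  have h1 := abs_nonneg (p.1.1 - q.1.1)
  have h2 := abs_nonneg (p.1.2 - q.1.2)
  have h3 := abs_nonneg (p.2 - q.2)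
  nlinarith

lemma dist_le_rhoTheta {θ : ℝ} (hθ : 0 < θ) (p q : (ℝ × ℝ) × ℝ) :
    dist p q ≤ max 1 θ⁻¹ * rhoTheta θ p q := by
  have hK1 : (1 : ℝ) ≤ max 1 θ⁻¹ := le_max_left _ _
  have hK2 : θ⁻¹ ≤ max 1 θ⁻¹ := le_max_right _ _
  have hrho := rhoTheta_nonneg hθ p q
  have h1 := abs_nonneg (p.1.1 - q.1.1)
  have h2 := abs_nonneg (p.1.2 - q.1.2)
  have h3 := abs_nonneg (p.2 - q.2)
  have hx : |p.1.1 - q.1.1| ≤ rhoTheta θ p q := by unfold rhoTheta; nlinarith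
  have hy : |p.1.2 - q.1.2| ≤ rhoTheta θ p q := by unfold rhoTheta; nlinarith
  have hz : |p.2 - q.2| ≤ θ⁻¹ * rhoTheta θ p q := by
    have : θ * |p.2 - q.2| ≤ rhoTheta θ p q := by unfold rhoTheta; nlinarith
    calc |p.2 - q.2| = θ⁻¹ * (θ * |p.2 - q.2|) := by field_simp
      _ ≤ θ⁻¹ * rhoTheta θ p q := by
          apply mul_le_mul_of_nonneg_left this (by positivity)
  have hrK : rhoTheta θ p q ≤ max 1 θ⁻¹ * rhoTheta θ p q := by nlinarith
  rw [Prod.dist_eq, Prod.dist_eq]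
  simp only [Real.dist_eq]
  apply max_le (max_le (hx.trans hrK) (hy.trans hrK))
  calc |p.2 - q.2| ≤ θ⁻¹ * rhoTheta θ p q := hz
    _ ≤ max 1 θ⁻¹ * rhoTheta θ p q := by nlinarith

lemma attractor_subset {ι : Type*} [Finite ι] [Nonempty ι]
    (θ : ℝ) (hθ : 0 < θ)
    (W : ι → (ℝ × ℝ) × ℝ → (ℝ × ℝ) × ℝ)
    (c : ι → ℝ) (hc : ∀ i, c i < 1)
    (hW : ∀ i, ∀ p q : (ℝ × ℝ) × ℝ, rhoTheta θ (W i p) (W i q) ≤ c i * rhoTheta θ p q)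
    (A G : Set ((ℝ × ℝ) × ℝ))
    (hAc : IsCompact A)
    (hGne : G.Nonempty) (hGclosed : IsClosed G)
    (hA : A = ⋃ i, W i '' A) (hGinv : ∀ i, W i '' G ⊆ G) :
    A ⊆ G := by
  rcases Set.eq_empty_or_nonempty A with rfl | hAne
  · exact empty_subset _
  have := Fintype.ofFinite ι
  -- contraction constant
  set c' : ℝ := max 0 ((Finset.univ : Finset ι).sup' Finset.univ_nonempty c) with hc'def
  have hc'0 : 0 ≤ c' := le_max_left _ _
  have hc'lt : c' < 1 := by
    apply max_lt one_pos
    exact (Finset.sup'_lt_iff Finset.univ_nonempty).mpr (fun i _ => hc i)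
  have hc'ge : ∀ i, c i ≤ c' := fun i =>
    le_trans (Finset.le_sup' c (Finset.mem_univ i)) (le_max_right _ _)
  obtain ⟨g0, hg0⟩ := hGne
  -- bound M on rhoTheta a g0 for a ∈ A
  have hcont : ContinuousOn (fun a => rhoTheta θ a g0) A := by
    apply Continuous.continuousOn
    unfold rhoTheta
    fun_prop
  obtain ⟨a0, ha0A, hmax⟩ := hAc.exists_isMaxOn hAne hcont
  set M : ℝ := rhoTheta θ a0 g0 with hMdef
  have hM0 : 0 ≤ M := rhoTheta_nonneg hθ a0 g0
  -- key induction
  have key : ∀ n : ℕ, ∀ a ∈ A, ∃ g ∈ G, rhoTheta θ a g ≤ c' ^ n * M := by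
    intro n
    induction n with
    | zero => intro a ha; exact ⟨g0, hg0, by simpa using hmax ha⟩
    | succ n ih =>
      intro a ha
      rw [hA] at ha
      simp only [Set.mem_iUnion, Set.mem_image] at ha
      obtain ⟨i, b, hb, rfl⟩ := ha
      obtain ⟨g, hg, hbg⟩ := ih b hb
      refine ⟨W i g, hGinv i ⟨g, hg, rfl⟩, ?_⟩
      have h1 := hW i b g
      have h2 : c i * rhoTheta θ b g ≤ c' * rhoTheta θ b g :=
        mul_le_mul_of_nonneg_right (hc'ge i) (rhoTheta_nonneg hθ b g)
      have h3 : c' * rhoTheta θ b g ≤ c' * (c' ^ n * M) :=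
        mul_le_mul_of_nonneg_left hbg hc'0
      calc rhoTheta θ (W i b) (W i g) ≤ c' * (c' ^ n * M) := by linarith
        _ = c' ^ (n + 1) * M := by ring
  -- conclude a ∈ closure G = G
  intro a ha
  rw [← hGclosed.closure_eq]
  rw [Metric.mem_closure_iff]
  intro ε hε
  set K : ℝ := max 1 θ⁻¹ with hKdef
  have hK0 : 0 < K := lt_of_lt_of_le one_pos (le_max_left _ _)
  have hKM : 0 < K * (M + 1) := by positivity
  obtain ⟨n, hn⟩ := exists_pow_lt_of_lt_one (div_pos hε hKM) hc'lt
  obtain ⟨g, hg, hag⟩ := key n a ha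
  refine ⟨g, hg, ?_⟩
  have hd := dist_le_rhoTheta hθ a g
  have h1 : K * rhoTheta θ a g ≤ K * (c' ^ n * M) :=
    mul_le_mul_of_nonneg_left hag hK0.le
  have h2 : K * (c' ^ n * M) ≤ c' ^ n * (K * (M + 1)) := by
    have : (0:ℝ) ≤ c' ^ n := pow_nonneg hc'0 n
    nlinarith
  have h3 : c' ^ n * (K * (M + 1)) < ε := by
    rw [div_eq_mul_inv] at hn
    calc c' ^ n * (K * (M + 1)) < ε * (K * (M + 1))⁻¹ * (K * (M + 1)) := by
          apply mul_lt_mul_of_pos_right hn hKM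
      _ = ε := by field_simp
  calc dist a g ≤ K * rhoTheta θ a g := hd
    _ < ε := by linarith

/-- If `G` is a nonempty compact set with `G = ⋃ᵢ Wᵢ(G)` and each `Wᵢ` is a
contraction with respect to the metric `ρ_θ` (equivalent to the Euclidean
metric), then `G` is the unique nonempty compact set invariant under the
Hutchinson operator, i.e. the attractor of the IFS `{Wᵢ}`. -/
theorem graph_is_attractor {ι : Type*} [Finite ι] [Nonempty ι]
    (θ : ℝ) (hθ : 0 < θ)
    (W : ι → (ℝ × ℝ) × ℝ → (ℝ × ℝ) × ℝ)
    (c : ι → ℝ) (hc : ∀ i, c i < 1)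
    (hW : ∀ i, ∀ p q : (ℝ × ℝ) × ℝ, rhoTheta θ (W i p) (W i q) ≤ c i * rhoTheta θ p q)
    (G : Set ((ℝ × ℝ) × ℝ)) (hGne : G.Nonempty) (hGc : IsCompact G)
    (hG : G = ⋃ i, W i '' G) :
    ∀ A : Set ((ℝ × ℝ) × ℝ), A.Nonempty → IsCompact A → A = ⋃ i, W i '' A → A = G := by
  intro A hAne hAc hA
  apply Set.Subset.antisymm
  · exact attractor_subset θ hθ W c hc hW A G hAc hGne hGc.isClosed hA
      (fun i => (Set.subset_iUnion (fun j => W j '' G) i).trans hG.symm.subset)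
  · exact attractor_subset θ hθ W c hc hW G A hGc hAne hAc.isClosed hG
      (fun i => (Set.subset_iUnion (fun j => W j '' A) i).trans hA.symm.subset)
end
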